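/- Let $\Gamma$ be a $2$-$Y$-homogeneous $(Y,Y')$-distance-biregular graph with $D \ge 3$ and $c'_2 \ge 2$. For even $i$ with $1 \le i \le \min\{D-1, D'-1\}$ and $\gamma_i \ne 0$, we have $\gamma_i(c_{i+1} - 1) = c_i(c'_2 - 1)$, where $\gamma_i = |\Gamma_{i-1}(u) \cap \Gamma_1(x) \cap \Gamma_1(y)|$ for $x \in Y$, $y \in \Gamma_2(x)$, $u \in \Gamma_i(x)\cap\Gamma_i(y)$. -/

import Mathlib

open SimpleGraph Set

/-- A `(Y,Y')`-distance-biregular graph: a finite connected bipartite graph in which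
every vertex is distance-regularized, and vertices in the same color class share the
same intersection numbers (`c`, `b` for class `Y` and `c'`, `b'` for class `Y'`),
while the two color classes have different intersection arrays.
`D` (resp. `D'`) is the common eccentricity of vertices in `Y` (resp. `Y'`). -/
structure DBRG (V : Type) [Fintype V] where
  G : SimpleGraph V
  conn : G.Connected
  Y : Finset V
  Y' : Finset V
  Yne : Y.Nonempty
  Y'ne : Y'.Nonempty
  cover : ∀ v, v ∈ Y ∨ v ∈ Y'
  disj : ∀ v, ¬(v ∈ Y ∧ v ∈ Y')
  bip : ∀ u v, G.Adj u v → (u ∈ Y ↔ v ∈ Y')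
  D : ℕ
  D' : ℕ
  eccY : ∀ x ∈ Y, (∃ y, G.dist x y = D) ∧ ∀ y, G.dist x y ≤ D
  eccY' : ∀ x ∈ Y', (∃ y, G.dist x y = D') ∧ ∀ y, G.dist x y ≤ D'
  c : ℕ → ℕ
  b : ℕ → ℕ
  c' : ℕ → ℕ
  b' : ℕ → ℕ
  hc : ∀ i, 1 ≤ i → ∀ x ∈ Y, ∀ z, G.dist x z = i →
    {w | G.Adj z w ∧ G.dist x w = i - 1}.ncard = c i
  hb : ∀ i, ∀ x ∈ Y, ∀ z, G.dist x z = i →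
    {w | G.Adj z w ∧ G.dist x w = i + 1}.ncard = b i
  hc' : ∀ i, 1 ≤ i → ∀ x ∈ Y', ∀ z, G.dist x z = i →
    {w | G.Adj z w ∧ G.dist x w = i - 1}.ncard = c' i
  hb' : ∀ i, ∀ x ∈ Y', ∀ z, G.dist x z = i →
    {w | G.Adj z w ∧ G.dist x w = i + 1}.ncard = b' i
  c0 : c 0 = 0
  c'0 : c' 0 = 0
  nonreg : ¬ (∀ i, c i = c' i ∧ b i = b' i)

/-- `Γ` is `2`-`Y`-homogeneous with parameters `γ i`: for all `1 ≤ i ≤ D - 1` and all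
`x ∈ Y`, `y ∈ Γ₂(x)`, `z ∈ Γ_{i,i}(x,y)`, the number of common neighbours of `x` and `y`
at distance `i - 1` from `z` equals `γ i` (independently of `x`, `y`, `z`). -/
def DBRG.TwoYHom {V : Type} [Fintype V] (Γ : DBRG V) (γ : ℕ → ℕ) : Prop :=
  ∀ i, 1 ≤ i → i ≤ Γ.D - 1 → ∀ x ∈ Γ.Y, ∀ y, Γ.G.dist x y = 2 →
    ∀ z, Γ.G.dist x z = i → Γ.G.dist y z = i →
      {w | Γ.G.dist z w = i - 1 ∧ Γ.G.Adj x w ∧ Γ.G.Adj y w}.ncard = γ i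
/-!
Fix `u ∈ Y`, `v ∈ Γ_i(u)` and a neighbour `w ∈ Γ_{i+1}(u)` of `v`. Double count the edges
between `P = Γ_{i-1}(u) ∩ Γ(v)`, of size `c_i`, and `Q = Γ_i(u) ∩ Γ(w) \ {v}`, of size
`c_{i+1} - 1`. Since `i` is even, every `q ∈ Q` lies in `Y` at distance `2` from `v` and has
`γ_i` neighbours in `P` by `2`-`Y`-homogeneity; every `p ∈ P` lies in `Y'` at distance `2`
from `w`, and its neighbours in `Q` are the `c'_2` common neighbours of `p` and `w` other
than `v`.
-/

open Finset

namespace SimpleGraph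

variable {V : Type} {G : SimpleGraph V}

theorem Walk.dist_getVert_of_length_eq_dist {u v : V} (p : G.Walk u v)
    (hp : p.length = G.dist u v) {n : ℕ} (hn : n ≤ p.length) :
    G.dist u (p.getVert n) = n := by
  rw [← length_eq_dist_of_subwalk hp (p.isSubwalk_take n), Walk.take_length]
  exact min_eq_left hn

theorem dist_eq_two_of_adj_of_adj {v w q : V} (hvw : G.Adj v w) (hwq : G.Adj w q)
    (hne : v ≠ q) (hnadj : ¬G.Adj v q) : G.dist v q = 2 := by
  have hle : G.dist v q ≤ 2 := dist_le (.cons hvw (.cons hwq .nil))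
  have hlt : 1 < G.dist v q := (hvw.reachable.trans hwq.reachable).one_lt_dist_of_ne_of_not_adj
    hne hnadj
  omega

open scoped Classical in
noncomputable def neighborsAtDist [Fintype V] (G : SimpleGraph V) (u v : V) (k : ℕ) :
    Finset V :=
  {x | G.Adj v x ∧ G.dist u x = k}

@[simp]
theorem mem_neighborsAtDist [Fintype V] {u v x : V} {k : ℕ} :
    x ∈ G.neighborsAtDist u v k ↔ G.Adj v x ∧ G.dist u x = k := by
  simp [neighborsAtDist]

theorem card_neighborsAtDist [Fintype V] (u v : V) (k : ℕ) :
    #(G.neighborsAtDist u v k) = {x | G.Adj v x ∧ G.dist u x = k}.ncard := by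
  rw [← Set.ncard_coe_finset]
  congr 1
  ext x
  simp

end SimpleGraph

namespace DBRG

open SimpleGraph

variable {V : Type} [Fintype V] (Γ : DBRG V)

theorem mem_Y'_iff_notMem_Y (v : V) : v ∈ Γ.Y' ↔ v ∉ Γ.Y :=
  ⟨fun hY' hY => Γ.disj v ⟨hY, hY'⟩, (Γ.cover v).resolve_left⟩

theorem mem_Y_iff_mem_Y_iff_even_length {a b : V} (p : Γ.G.Walk a b) :
    (a ∈ Γ.Y ↔ b ∈ Γ.Y) ↔ Even p.length := by
  induction p with
  | nil => simp
  | @cons a c b hac p ih =>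
    have := Γ.bip a c hac
    rw [mem_Y'_iff_notMem_Y] at this
    simp only [Walk.length_cons, Nat.even_add_one]
    tauto

theorem mem_Y_iff_even_dist {u : V} (hu : u ∈ Γ.Y) (v : V) :
    v ∈ Γ.Y ↔ Even (Γ.G.dist u v) := by
  obtain ⟨p, hp⟩ := Γ.conn.exists_walk_length_eq_dist u v
  rw [← hp, ← Γ.mem_Y_iff_mem_Y_iff_even_length p]
  tauto

theorem not_adj_of_even_dist_iff {u v q : V} (hu : u ∈ Γ.Y)
    (h : Even (Γ.G.dist u v) ↔ Even (Γ.G.dist u q)) : ¬Γ.G.Adj v q := by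
  intro hvq
  have := Γ.bip v q hvq
  rw [mem_Y'_iff_notMem_Y, Γ.mem_Y_iff_even_dist hu, Γ.mem_Y_iff_even_dist hu] at this
  tauto

theorem exists_adj_dist_eq_succ {u : V} (hu : u ∈ Γ.Y) {i : ℕ} (hi : i < Γ.D) :
    ∃ v w, Γ.G.dist u v = i ∧ Γ.G.dist u w = i + 1 ∧ Γ.G.Adj v w := by
  obtain ⟨⟨y, hy⟩, -⟩ := Γ.eccY u hu
  obtain ⟨p, hp⟩ := Γ.conn.exists_walk_length_eq_dist u y
  have hlen : p.length = Γ.D := hp.trans hy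
  exact ⟨p.getVert i, p.getVert (i + 1), p.dist_getVert_of_length_eq_dist hp (by omega),
    p.dist_getVert_of_length_eq_dist hp (by omega), p.adj_getVert_succ (by omega)⟩

theorem card_neighborsAtDist_pred {u v : V} (hu : u ∈ Γ.Y) {k : ℕ} (hk : 1 ≤ k)
    (hv : Γ.G.dist u v = k) : #(Γ.G.neighborsAtDist u v (k - 1)) = Γ.c k := by
  rw [card_neighborsAtDist]
  exact Γ.hc k hk u hu v hv

section DoubleCounting

open scoped Classical

variable {Γ} {u v w : V} {i : ℕ}

theorem card_adj_neighborsAtDist_eq_gamma {γ : ℕ → ℕ} (hhom : Γ.TwoYHom γ) (hu : u ∈ Γ.Y)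
    (hev : Even i) (hi1 : 1 ≤ i) (hiD : i ≤ Γ.D - 1) (hv : Γ.G.dist u v = i)
    (hvw : Γ.G.Adj v w) {q : V} (hq : q ∈ (Γ.G.neighborsAtDist u w i).erase v) :
    #{p ∈ Γ.G.neighborsAtDist u v (i - 1) | Γ.G.Adj p q} = γ i := by
  obtain ⟨hqv, hwq, hq⟩ : q ≠ v ∧ Γ.G.Adj w q ∧ Γ.G.dist u q = i := by simpa using hq
  have hvY : v ∈ Γ.Y := (Γ.mem_Y_iff_even_dist hu v).2 (hv ▸ hev)
  have hvq : Γ.G.dist v q = 2 :=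
    dist_eq_two_of_adj_of_adj hvw hwq hqv.symm (Γ.not_adj_of_even_dist_iff hu (by rw [hv, hq]))
  rw [← hhom i hi1 hiD v hvY q hvq u (by rwa [dist_comm]) (by rwa [dist_comm]),
    ← Set.ncard_coe_finset]
  congr 1
  ext p
  simp only [coe_filter, mem_neighborsAtDist, Set.mem_ofPred_eq, Γ.G.adj_comm p q]
  tauto

theorem card_adj_erase_neighborsAtDist_add_one (hu : u ∈ Γ.Y) (hev : Even i)
    (hi1 : 1 ≤ i) (hv : Γ.G.dist u v = i) (hw : Γ.G.dist u w = i + 1) (hvw : Γ.G.Adj v w)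
    {p : V} (hp : p ∈ Γ.G.neighborsAtDist u v (i - 1)) :
    #{q ∈ (Γ.G.neighborsAtDist u w i).erase v | Γ.G.Adj p q} + 1 = Γ.c' 2 := by
  obtain ⟨hvp, hp⟩ : Γ.G.Adj v p ∧ Γ.G.dist u p = i - 1 := by simpa using hp
  have hparity : ¬Even (i - 1) ∧ ¬Even (i + 1) := by
    obtain ⟨j, rfl⟩ := hev
    constructor <;> rintro ⟨k, hk⟩ <;> omega
  have hpY' : p ∈ Γ.Y' :=
    (Γ.mem_Y'_iff_notMem_Y p).2 fun h => hparity.1 (hp ▸ (Γ.mem_Y_iff_even_dist hu p).1 h)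
  have hpw : Γ.G.dist p w = 2 :=
    dist_eq_two_of_adj_of_adj hvp.symm hvw (by rintro rfl; omega)
      (Γ.not_adj_of_even_dist_iff hu (by rw [hp, hw]; tauto))
  have hcommon : {q ∈ (Γ.G.neighborsAtDist u w i).erase v | Γ.G.Adj p q} =
      (Γ.G.neighborsAtDist p w 1).erase v := by
    ext q
    simp only [mem_filter, mem_erase, mem_neighborsAtDist, dist_eq_one_iff_adj]
    constructor
    · rintro ⟨⟨hqv, hwq, -⟩, hpq⟩
      exact ⟨hqv, hwq, hpq⟩
    · rintro ⟨hqv, hwq, hpq⟩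
      have := hpq.diff_dist_adj (u := u)
      have := hwq.diff_dist_adj (u := u)
      exact ⟨⟨hqv, hwq, by omega⟩, hpq⟩
  have hv_mem : v ∈ Γ.G.neighborsAtDist p w 1 := by
    simpa [dist_eq_one_iff_adj] using ⟨hvw.symm, hvp.symm⟩
  rw [hcommon, card_erase_add_one hv_mem, card_neighborsAtDist]
  exact Γ.hc' 2 (by norm_num) p hpY' w hpw

theorem gamma_mul_c_succ_sub_one {γ : ℕ → ℕ} (hhom : Γ.TwoYHom γ) (hu : u ∈ Γ.Y)
    (hev : Even i) (hi1 : 1 ≤ i) (hiD : i ≤ Γ.D - 1) (hv : Γ.G.dist u v = i)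
    (hw : Γ.G.dist u w = i + 1) (hvw : Γ.G.Adj v w) :
    (γ i : ℤ) * ((Γ.c (i + 1) : ℤ) - 1) = (Γ.c i : ℤ) * ((Γ.c' 2 : ℤ) - 1) := by
  set P := Γ.G.neighborsAtDist u v (i - 1)
  set Q := (Γ.G.neighborsAtDist u w i).erase v
  have hP : #P = Γ.c i := Γ.card_neighborsAtDist_pred hu hi1 hv
  have hQ : #Q + 1 = Γ.c (i + 1) := by
    rw [card_erase_add_one (by simpa using ⟨hvw.symm, hv⟩),
      ← Γ.card_neighborsAtDist_pred hu (Nat.le_add_left 1 i) hw, Nat.add_sub_cancel]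
  have hbelow : ∀ q ∈ Q, #(P.bipartiteBelow Γ.G.Adj q) = γ i := fun q hq =>
    card_adj_neighborsAtDist_eq_gamma hhom hu hev hi1 hiD hv hvw hq
  have habove : ∀ p ∈ P, #(Q.bipartiteAbove Γ.G.Adj p) + 1 = Γ.c' 2 := fun p hp =>
    card_adj_erase_neighborsAtDist_add_one hu hev hi1 hv hw hvw hp
  have hcount : #Q * γ i + #P = #P * Γ.c' 2 := by
    rw [← sum_const_nat habove, sum_add_distrib,
      sum_card_bipartiteAbove_eq_sum_card_bipartiteBelow, sum_const_nat hbelow, sum_const,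
      smul_eq_mul, mul_one, mul_comm]
  rw [← hP, ← hQ]
  push_cast
  linear_combination (by exact_mod_cast hcount : (#Q * γ i + #P : ℤ) = #P * Γ.c' 2)

end DoubleCounting

end DBRG

theorem stmt_12_general {V : Type} [Fintype V] (Γ : DBRG V)
    (γ : ℕ → ℕ) (hhom : Γ.TwoYHom γ)
    (i : ℕ) (hev : Even i) (hi1 : 1 ≤ i) (hi2 : i ≤ min (Γ.D - 1) (Γ.D' - 1)) :
    (γ i : ℤ) * ((Γ.c (i + 1) : ℤ) - 1) = (Γ.c i : ℤ) * ((Γ.c' 2 : ℤ) - 1) := by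
  obtain ⟨u, hu⟩ := Γ.Yne
  have hiD : i ≤ Γ.D - 1 := hi2.trans (min_le_left _ _)
  obtain ⟨v, w, hv, hw, hvw⟩ := Γ.exists_adj_dist_eq_succ hu (i := i) (by omega)
  exact DBRG.gamma_mul_c_succ_sub_one hhom hu hev hi1 hiD hv hw hvw

theorem stmt_12 {V : Type} [Fintype V] (Γ : DBRG V) (hD : 3 ≤ Γ.D)
    (γ : ℕ → ℕ) (hhom : Γ.TwoYHom γ) (hc2' : 2 ≤ Γ.c' 2)
    (i : ℕ) (hev : Even i) (hi1 : 1 ≤ i) (hi2 : i ≤ min (Γ.D - 1) (Γ.D' - 1))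
    (hγ : γ i ≠ 0) :
    (γ i : ℤ) * ((Γ.c (i + 1) : ℤ) - 1) = (Γ.c i : ℤ) * ((Γ.c' 2 : ℤ) - 1) :=
  stmt_12_general Γ γ hhom i hev hi1 hi2
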